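/- For every m ≥ 1, the endomorphism ω_m of K⟨x,y,z⟩ given by x ↦ x + z(xz − zy)^m, y ↦ y + (xz − zy)^m z, z ↦ z is an automorphism with inverse x ↦ x − z(xz − zy)^m, y ↦ y − (xz − zy)^m z, z ↦ z. -/
import Mathlib


open FreeAlgebra

noncomputable section

variable (K : Type*) [Field K]

local notation "x" => FreeAlgebra.ι K (0 : Fin 3)
local notation "y" => FreeAlgebra.ι K (1 : Fin 3)
local notation "z" => FreeAlgebra.ι K (2 : Fin 3)

/-- The endomorphism ω_m of K⟨x,y,z⟩:
x ↦ x + z(xz - zy)^m, y ↦ y + (xz - zy)^m z, z ↦ z. -/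
def omegaM (m : ℕ) : FreeAlgebra K (Fin 3) →ₐ[K] FreeAlgebra K (Fin 3) :=
  FreeAlgebra.lift K
    ![x + z * (x * z - z * y) ^ m, y + (x * z - z * y) ^ m * z, z]

/-- The candidate inverse: x ↦ x - z(xz - zy)^m, y ↦ y - (xz - zy)^m z, z ↦ z. -/
def omegaMInv (m : ℕ) : FreeAlgebra K (Fin 3) →ₐ[K] FreeAlgebra K (Fin 3) :=
  FreeAlgebra.lift K
    ![x - z * (x * z - z * y) ^ m, y - (x * z - z * y) ^ m * z, z]

lemma omegaM_x (m : ℕ) : omegaM K m x = x + z * (x * z - z * y) ^ m := by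
  simp [omegaM, lift_ι_apply]

lemma omegaM_y (m : ℕ) : omegaM K m y = y + (x * z - z * y) ^ m * z := by
  simp [omegaM, lift_ι_apply]

lemma omegaM_z (m : ℕ) : omegaM K m z = z := by
  simp [omegaM, lift_ι_apply]

lemma omegaMInv_x (m : ℕ) : omegaMInv K m x = x - z * (x * z - z * y) ^ m := by
  simp [omegaMInv, lift_ι_apply]

lemma omegaMInv_y (m : ℕ) : omegaMInv K m y = y - (x * z - z * y) ^ m * z := by
  simp [omegaMInv, lift_ι_apply]

lemma omegaMInv_z (m : ℕ) : omegaMInv K m z = z := by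
  simp [omegaMInv, lift_ι_apply]

lemma omegaM_u (m : ℕ) : omegaM K m (x * z - z * y) = x * z - z * y := by
  simp only [map_sub, map_mul, omegaM_x, omegaM_y, omegaM_z]
  noncomm_ring

lemma omegaMInv_u (m : ℕ) : omegaMInv K m (x * z - z * y) = x * z - z * y := by
  simp only [map_sub, map_mul, omegaMInv_x, omegaMInv_y, omegaMInv_z]
  noncomm_ring

/-- For every m ≥ 1, ω_m is an automorphism of K⟨x,y,z⟩ with inverse
x ↦ x - z(xz - zy)^m, y ↦ y - (xz - zy)^m z, z ↦ z. -/
theorem stmt_9 (m : ℕ) (hm : 1 ≤ m) :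
    (omegaM K m).comp (omegaMInv K m) = AlgHom.id K (FreeAlgebra K (Fin 3)) ∧
    (omegaMInv K m).comp (omegaM K m) = AlgHom.id K (FreeAlgebra K (Fin 3)) := by
  constructor
  · apply FreeAlgebra.hom_ext
    funext i
    simp only [Function.comp_apply, AlgHom.coe_comp, AlgHom.coe_id, id_eq]
    fin_cases i
    · show (omegaM K m) ((omegaMInv K m) x) = x
      rw [omegaMInv_x, map_sub, map_mul, map_pow, omegaM_x, omegaM_z, omegaM_u]
      abel
    · show (omegaM K m) ((omegaMInv K m) y) = y
      rw [omegaMInv_y, map_sub, map_mul, map_pow, omegaM_y, omegaM_z, omegaM_u]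
      abel
    · show (omegaM K m) ((omegaMInv K m) z) = z
      rw [omegaMInv_z, omegaM_z]
  · apply FreeAlgebra.hom_ext
    funext i
    simp only [Function.comp_apply, AlgHom.coe_comp, AlgHom.coe_id, id_eq]
    fin_cases i
    · show (omegaMInv K m) ((omegaM K m) x) = x
      rw [omegaM_x, map_add, map_mul, map_pow, omegaMInv_x, omegaMInv_z, omegaMInv_u]
      abel
    · show (omegaMInv K m) ((omegaM K m) y) = y
      rw [omegaM_y, map_add, map_mul, map_pow, omegaMInv_y, omegaMInv_z, omegaMInv_u]
      abel
    · show (omegaMInv K m) ((omegaM K m) z) = z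
      rw [omegaM_z, omegaMInv_z]

end
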